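/- Correctness of α-β pruning for AND-OR marked trees: let T be a finite dialectical tree with the AND-OR marking, and let T' be any subtree of T obtained by deleting, for each node marked D, all but one child that is marked U (keeping all children of U-nodes). Then the root of T' (marked by the same AND-OR rule) receives the same mark as the root of T. -/
import Mathlib


/-- Finite rooted trees. -/
inductive DTree (α : Type) : Type
  | node : α → List (DTree α) → DTree α

/-- The root label of a tree. -/
def DTree.root {α : Type} : DTree α → α
  | .node a _ => a

/-- The AND-OR marking: `true` = U, `false` = D. Leaves get U; an inner node is U
iff all its children are D, and D iff some child is U. -/
def DTree.mark {α : Type} : DTree α → Bool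
  | .node _ cs => cs.attach.all (fun c => ! c.1.mark)
decreasing_by
  have := List.sizeOf_lt_of_mem c.2
  simp only [DTree.node.sizeOf_spec]
  omega

/-- α-β pruning of an AND-OR marked tree: at a U-node all children are kept
(and pruned recursively); at a D-node exactly one child marked U is kept. -/
inductive Pruned {α : Type} : DTree α → DTree α → Prop
  | keepU {a : α} {cs cs' : List (DTree α)} :
      DTree.mark (.node a cs) = true →
      List.Forall₂ Pruned cs cs' → Pruned (.node a cs) (.node a cs')
  | pruneD {a : α} {cs : List (DTree α)} {c c' : DTree α} :
      DTree.mark (.node a cs) = false →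
      c ∈ cs → c.mark = true → Pruned c c' →
      Pruned (.node a cs) (.node a [c'])

lemma mark_node {α : Type} (a : α) (cs : List (DTree α)) :
    (DTree.node a cs).mark = cs.all (fun c => ! c.mark) := by
  rw [DTree.mark, List.all_eq, List.all_eq]
  simp

lemma forall₂_mem_right {α β : Type} {r : α → β → Prop} {l : List α} {l' : List β}
    (h : List.Forall₂ r l l') {b : β} (hb : b ∈ l') : ∃ a ∈ l, r a b := by
  induction h with
  | nil => cases hb
  | cons hr _ ih =>
    rcases List.mem_cons.mp hb with rfl | hb
    · exact ⟨_, List.mem_cons_self .., hr⟩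
    · obtain ⟨a, ha, hra⟩ := ih hb
      exact ⟨a, List.mem_cons_of_mem _ ha, hra⟩

/-- correctness of α-β pruning: the root of the pruned tree
receives the same mark as the root of the original tree. -/
theorem pruned_mark_eq {α : Type} (T T' : DTree α) (hp : Pruned T T') :
    T'.mark = T.mark := by
  cases T with
  | node a cs =>
  cases hp with
  | keepU h h2 =>
    rename_i cs'
    rw [mark_node, h]
    rw [mark_node, List.all_eq_true] at h
    rw [List.all_eq_true]
    intro c' hc'
    obtain ⟨c, hc, hpc⟩ := forall₂_mem_right h2 hc'
    have hs : sizeOf c < sizeOf (DTree.node a cs) := by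
      have := List.sizeOf_lt_of_mem hc
      simp only [DTree.node.sizeOf_spec]; omega
    rw [pruned_mark_eq c c' hpc]
    exact h c hc
  | pruneD h hmem hm hpc =>
    rename_i c c'
    have hs : sizeOf c < sizeOf (DTree.node a cs) := by
      have := List.sizeOf_lt_of_mem hmem
      simp only [DTree.node.sizeOf_spec]; omega
    rw [mark_node, h]
    simp [pruned_mark_eq c c' hpc, hm]
termination_by sizeOf T
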